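/- Let n ≥ 1 and let A be a retract of McN([0,1]ⁿ) that separates points of [0,1]ⁿ, i.e., for all distinct x, y ∈ [0,1]ⁿ there exists f ∈ A with f(x) ≠ f(y). Then A = McN([0,1]ⁿ). Moreover, if σ ≠ τ are Z-retractions of [0,1]ⁿ with R_σ = R_τ, then the associated retracts A_σ and A_τ are incomparable: neither A_σ ⊆ A_τ nor A_τ ⊆ A_σ. -/

import Mathlib

open Set MeasureTheory

/-- The unit cube `[0,1]^n` in `ℝ^n`. -/
def cubeSet (n : ℕ) : Set (Fin n → ℝ) := Set.Icc 0 1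

/-- A point all of whose coordinates are rational. -/
def IsRationalPoint {n : ℕ} (v : Fin n → ℝ) : Prop := ∀ i, ∃ q : ℚ, v i = (q : ℝ)

/-- A rational polyhedron: a finite union of convex hulls of finite sets of rational points. -/
def IsRationalPolyhedron {n : ℕ} (P : Set (Fin n → ℝ)) : Prop :=
  ∃ S : Finset (Finset (Fin n → ℝ)),
    (∀ F ∈ S, ∀ v ∈ F, IsRationalPoint v) ∧
    P = ⋃ F ∈ S, convexHull ℝ (F : Set (Fin n → ℝ))

/-- An affine map `x ↦ Mx + b` with integer matrix `M` and integer vector `b`. -/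
def IsIntAffine {n m : ℕ} (g : (Fin n → ℝ) → (Fin m → ℝ)) : Prop :=
  ∃ (M : Fin m → Fin n → ℤ) (b : Fin m → ℤ),
    ∀ x i, g x i = (∑ j, (M i j : ℝ) * x j) + (b i : ℝ)

/-- A Z-map on `P`: continuous on `P`, with finitely many integer affine pieces. -/
def IsZMapOn {n m : ℕ} (P : Set (Fin n → ℝ)) (f : (Fin n → ℝ) → (Fin m → ℝ)) : Prop :=
  ContinuousOn f P ∧
  ∃ (k : ℕ) (g : Fin k → (Fin n → ℝ) → (Fin m → ℝ)),
    (∀ i, IsIntAffine (g i)) ∧ ∀ x ∈ P, ∃ i, f x = g i x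

/-- `f` restricted to `P` is a Z-homeomorphism of `P` onto `Q`. -/
def IsZHomeoOnto {n m : ℕ} (P : Set (Fin n → ℝ)) (Q : Set (Fin m → ℝ))
    (f : (Fin n → ℝ) → (Fin m → ℝ)) : Prop :=
  IsZMapOn P f ∧ f '' P = Q ∧ Set.InjOn f P ∧
  ∃ g : (Fin m → ℝ) → (Fin n → ℝ),
    IsZMapOn Q g ∧ (∀ x ∈ P, g (f x) = x) ∧ (∀ y ∈ Q, f (g y) = y)

/-- A Z-retraction of the cube `[0,1]^n`. -/
def IsZRetraction {n : ℕ} (σ : (Fin n → ℝ) → (Fin n → ℝ)) : Prop :=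
  IsZMapOn (cubeSet n) σ ∧ Set.MapsTo σ (cubeSet n) (cubeSet n) ∧
  ∀ x ∈ cubeSet n, σ (σ x) = σ x

/-- The range `R_σ = σ([0,1]^n)` of a Z-retraction. -/
def zRange {n : ℕ} (σ : (Fin n → ℝ) → (Fin n → ℝ)) : Set (Fin n → ℝ) := σ '' cubeSet n

/-- A Z-homeomorphism domain for `σ`: a rational polyhedron `Q ⊆ [0,1]^n` such that
`σ` restricted to `Q` is a Z-homeomorphism of `Q` onto `R_σ`. -/
def IsZHomeoDomain {n : ℕ} (σ : (Fin n → ℝ) → (Fin n → ℝ)) (Q : Set (Fin n → ℝ)) : Prop :=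
  IsRationalPolyhedron Q ∧ Q ⊆ cubeSet n ∧ IsZHomeoOnto Q (zRange σ) σ

/-- A (Kuratowski) closed domain: `D` equals the closure of its interior. -/
def IsClosedDomain {n : ℕ} (D : Set (Fin n → ℝ)) : Prop :=
  closure (interior D) = D

/-- A scalar integer affine map. -/
def IsIntAffine1 {n : ℕ} (g : (Fin n → ℝ) → ℝ) : Prop :=
  ∃ (m : Fin n → ℤ) (b : ℤ), ∀ x, g x = (∑ j, (m j : ℝ) * x j) + (b : ℝ)

/-- A scalar Z-map on `P`. -/
def IsZMapOn1 {n : ℕ} (P : Set (Fin n → ℝ)) (f : (Fin n → ℝ) → ℝ) : Prop :=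
  ContinuousOn f P ∧
  ∃ (k : ℕ) (g : Fin k → (Fin n → ℝ) → ℝ),
    (∀ i, IsIntAffine1 (g i)) ∧ ∀ x ∈ P, ∃ i, f x = g i x

/-- The free MV-algebra `McN([0,1]^n)`, viewed as a set of functions on the cube. -/
def McN (n : ℕ) : Set (↥(cubeSet n) → ℝ) :=
  { f | (∀ x, f x ∈ Set.Icc (0:ℝ) 1) ∧
    ∃ g : (Fin n → ℝ) → ℝ, IsZMapOn1 (cubeSet n) g ∧ ∀ x : ↥(cubeSet n), f x = g x.1 }

/-- Pointwise MV-sum `f ⊕ g = min(f + g, 1)`. -/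
def mvAdd {X : Type*} (f g : X → ℝ) : X → ℝ := fun x => min (f x + g x) 1

/-- Pointwise MV-negation `¬f = 1 - f`. -/
def mvNeg {X : Type*} (f : X → ℝ) : X → ℝ := fun x => 1 - f x

/-- The retract `A_σ = {g ∘ σ : g ∈ McN([0,1]^n)}` associated with a Z-retraction `σ`. -/
def retAlg {n : ℕ} (σ : (Fin n → ℝ) → (Fin n → ℝ)) : Set (↥(cubeSet n) → ℝ) :=
  { f | ∃ g ∈ McN n, ∀ (x : ↥(cubeSet n)) (h : σ x.1 ∈ cubeSet n), f x = g ⟨σ x.1, h⟩ }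

/-- `ε` is a retraction of `McN([0,1]^n)` onto `A`. -/
def IsMcNRetraction {n : ℕ} (ε : ↥(McN n) → ↥(McN n)) (A : Set (↥(cubeSet n) → ℝ)) : Prop :=
  (∀ (f g : ↥(McN n)) (h : mvAdd f.1 g.1 ∈ McN n),
      (ε ⟨mvAdd f.1 g.1, h⟩).1 = mvAdd (ε f).1 (ε g).1) ∧
  (∀ (f : ↥(McN n)) (h : mvNeg f.1 ∈ McN n),
      (ε ⟨mvNeg f.1, h⟩).1 = mvNeg (ε f).1) ∧
  (∀ f, ε (ε f) = ε f) ∧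
  Subtype.val '' Set.range ε = A

/-- An MV-isomorphism between two sets of `[0,1]`-valued functions. -/
def IsMVIsoFun {X Y : Type*} (A : Set (X → ℝ)) (B : Set (Y → ℝ)) (h : ↥A → ↥B) : Prop :=
  Function.Bijective h ∧
  (∀ (f g : ↥A) (hm : mvAdd f.1 g.1 ∈ A),
      (h ⟨mvAdd f.1 g.1, hm⟩).1 = mvAdd (h f).1 (h g).1) ∧
  (∀ (f : ↥A) (hm : mvNeg f.1 ∈ A),
      (h ⟨mvNeg f.1, hm⟩).1 = mvNeg (h f).1)

/-! Every MV-homomorphism `χ : McN([0,1]^n) → [0,1]` is evaluation at a point `x₀` of the cube: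
by compactness the zero sets of the functions in the kernel of `χ` have a common point `x₀`, and
if `χ f ≠ f x₀` a dyadic rescaling `t ↦ min (max (2^k t - a) 0) 1` of `f`, which `χ` commutes with,
lies in the kernel without vanishing at `x₀`. Applied to `g ↦ (ε g) x` for a retraction `ε`, this
gives a point `x₀` at which all of `A` takes the same values as at `x`; separation forces `x₀ = x`,
so `ε` is the identity. -/

theorem IsIntAffine1.const {n : ℕ} (c : ℤ) : IsIntAffine1 (fun _ : Fin n → ℝ => (c : ℝ)) :=
  ⟨0, c, fun x => by simp⟩

theorem IsIntAffine1.proj {n : ℕ} (i : Fin n) : IsIntAffine1 (fun x : Fin n → ℝ => x i) :=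
  ⟨Pi.single i 1, 0, fun x => by simp [Pi.single_apply, ite_mul]⟩

theorem IsIntAffine1.add {n : ℕ} {g₁ g₂ : (Fin n → ℝ) → ℝ}
    (h₁ : IsIntAffine1 g₁) (h₂ : IsIntAffine1 g₂) : IsIntAffine1 (fun x => g₁ x + g₂ x) := by
  obtain ⟨m₁, b₁, e₁⟩ := h₁
  obtain ⟨m₂, b₂, e₂⟩ := h₂
  refine ⟨m₁ + m₂, b₁ + b₂, fun x => ?_⟩
  simp only [e₁, e₂, Pi.add_apply, Int.cast_add, add_mul, Finset.sum_add_distrib]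
  ring

theorem IsIntAffine1.one_sub {n : ℕ} {g : (Fin n → ℝ) → ℝ} (h : IsIntAffine1 g) :
    IsIntAffine1 (fun x => 1 - g x) := by
  obtain ⟨m, b, e⟩ := h
  refine ⟨-m, 1 - b, fun x => ?_⟩
  simp only [e, Pi.neg_apply, Int.cast_neg, Int.cast_sub, Int.cast_one, neg_mul,
    Finset.sum_neg_distrib]
  ring

theorem IsZMapOn1.of_fintype {n : ℕ} {P : Set (Fin n → ℝ)} {f : (Fin n → ℝ) → ℝ}
    {ι : Type} [Fintype ι] (hc : ContinuousOn f P) (g : ι → (Fin n → ℝ) → ℝ)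
    (hg : ∀ i, IsIntAffine1 (g i)) (hf : ∀ x ∈ P, ∃ i, f x = g i x) : IsZMapOn1 P f := by
  refine ⟨hc, Fintype.card ι, fun j => g ((Fintype.equivFin ι).symm j), fun j => hg _,
    fun x hx => ?_⟩
  obtain ⟨i, hi⟩ := hf x hx
  exact ⟨Fintype.equivFin ι i, by simpa using hi⟩

theorem IsZMapOn1.of_intAffine1 {n : ℕ} {P : Set (Fin n → ℝ)} {g : (Fin n → ℝ) → ℝ}
    (hg : IsIntAffine1 g) : IsZMapOn1 P g := by
  obtain ⟨m, b, e⟩ := hg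
  refine IsZMapOn1.of_fintype (ι := Unit) ?_ (fun _ => g) (fun _ => ⟨m, b, e⟩)
    (fun _ _ => ⟨(), rfl⟩)
  rw [show g = _ from funext e]
  fun_prop

theorem IsZMapOn1.one_sub {n : ℕ} {P : Set (Fin n → ℝ)} {f : (Fin n → ℝ) → ℝ}
    (hf : IsZMapOn1 P f) : IsZMapOn1 P (fun x => 1 - f x) := by
  obtain ⟨hc, k, g, hg, hfg⟩ := hf
  refine ⟨continuousOn_const.sub hc, k, fun i x => 1 - g i x, fun i => (hg i).one_sub,
    fun x hx => ?_⟩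
  obtain ⟨i, hi⟩ := hfg x hx
  exact ⟨i, congrArg (1 - ·) hi⟩

theorem IsZMapOn1.min_add_one {n : ℕ} {P : Set (Fin n → ℝ)} {f₁ f₂ : (Fin n → ℝ) → ℝ}
    (h₁ : IsZMapOn1 P f₁) (h₂ : IsZMapOn1 P f₂) :
    IsZMapOn1 P (fun x => min (f₁ x + f₂ x) 1) := by
  obtain ⟨hc₁, k₁, g₁, hg₁, hfg₁⟩ := h₁
  obtain ⟨hc₂, k₂, g₂, hg₂, hfg₂⟩ := h₂
  refine IsZMapOn1.of_fintype (ι := Option (Fin k₁ × Fin k₂))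
    ((hc₁.add hc₂).inf continuousOn_const)
    (fun o => o.elim (fun _ => 1) (fun p x => g₁ p.1 x + g₂ p.2 x)) ?_ (fun x hx => ?_)
  · rintro (_ | ⟨i, j⟩)
    · simpa using IsIntAffine1.const (n := n) 1
    · exact (hg₁ i).add (hg₂ j)
  · obtain ⟨i, hi⟩ := hfg₁ x hx
    obtain ⟨j, hj⟩ := hfg₂ x hx
    rcases le_total (f₁ x + f₂ x) 1 with h | h
    · exact ⟨some (i, j), by rw [min_eq_left h]; simp [hi, hj]⟩
    · exact ⟨none, by simp [min_eq_right h]⟩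

instance (n : ℕ) : CompactSpace (cubeSet n) := isCompact_iff_compactSpace.mp isCompact_Icc

instance (n : ℕ) : Nonempty (cubeSet n) := ⟨⟨0, le_rfl, zero_le_one⟩⟩

namespace McN

variable {n : ℕ}

theorem mem_Icc (f : McN n) (x : cubeSet n) : f.1 x ∈ Icc (0 : ℝ) 1 := f.2.1 x

theorem continuous (f : McN n) : Continuous f.1 := by
  obtain ⟨_, g, ⟨hc, _⟩, he⟩ := f.2
  rw [show f.1 = (cubeSet n).domRestrict g from funext he]
  exact hc.domRestrict

theorem const_mem {c : ℤ} (hc : (c : ℝ) ∈ Icc 0 1) : (fun _ : cubeSet n => (c : ℝ)) ∈ McN n :=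
  ⟨fun _ => hc, _, .of_intAffine1 (.const c), fun _ => rfl⟩

theorem proj_mem (i : Fin n) : (fun x : cubeSet n => x.1 i) ∈ McN n :=
  ⟨fun x => ⟨x.2.1 i, x.2.2 i⟩, _, .of_intAffine1 (.proj i), fun _ => rfl⟩

theorem mvNeg_mem {f : cubeSet n → ℝ} (hf : f ∈ McN n) : mvNeg f ∈ McN n := by
  obtain ⟨hb, g, hg, he⟩ := hf
  refine ⟨fun x => ?_, _, hg.one_sub, fun x => by simp [mvNeg, he x]⟩
  have := hb x
  simp only [mvNeg, Set.mem_Icc] at this ⊢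
  constructor <;> linarith

theorem mvAdd_mem {f₁ f₂ : cubeSet n → ℝ} (h₁ : f₁ ∈ McN n) (h₂ : f₂ ∈ McN n) :
    mvAdd f₁ f₂ ∈ McN n := by
  obtain ⟨hb₁, g₁, hg₁, he₁⟩ := h₁
  obtain ⟨hb₂, g₂, hg₂, he₂⟩ := h₂
  refine ⟨fun x => ⟨le_min ?_ zero_le_one, min_le_right _ _⟩, _, hg₁.min_add_one hg₂,
    fun x => by simp [mvAdd, he₁ x, he₂ x]⟩
  linarith [(hb₁ x).1, (hb₂ x).1]

def zero : McN n := ⟨fun _ => 0, by simpa using const_mem (n := n) (c := 0) (by simp)⟩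

def one : McN n := ⟨fun _ => 1, by simpa using const_mem (n := n) (c := 1) (by simp)⟩

def add (f g : McN n) : McN n := ⟨mvAdd f.1 g.1, mvAdd_mem f.2 g.2⟩

def neg (f : McN n) : McN n := ⟨mvNeg f.1, mvNeg_mem f.2⟩

end McN

theorem clamp_pow_mul_double (t : ℝ) {k a : ℕ} (ha : a < 2 ^ k) :
    min (max ((2 : ℝ) ^ k * min (t + t) 1 - a) 0) 1
      = min (max ((2 : ℝ) ^ (k + 1) * t - a) 0) 1 := by
  have ha' : (a : ℝ) + 1 ≤ 2 ^ k := by exact_mod_cast ha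
  rw [pow_succ]
  rcases le_total (t + t) 1 with h | h
  · rw [min_eq_left h]; ring_nf
  · have : (2 : ℝ) ^ k ≤ 2 ^ k * 2 * t := by nlinarith [pow_pos (two_pos (α := ℝ)) k]
    rw [min_eq_right h, max_eq_left (by linarith), max_eq_left (by linarith),
      min_eq_right (by linarith), min_eq_right (by linarith)]

theorem clamp_pow_mul_double_dual (t : ℝ) (k a : ℕ) :
    min (max ((2 : ℝ) ^ k * (1 - min ((1 - t) + (1 - t)) 1) - a) 0) 1
      = min (max ((2 : ℝ) ^ (k + 1) * t - ((2 ^ k + a : ℕ) : ℝ)) 0) 1 := by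
  push_cast
  rw [pow_succ]
  rcases le_total (t + t) 1 with h | h
  · have : 2 ^ k * 2 * t ≤ (2 : ℝ) ^ k := by nlinarith [pow_pos (two_pos (α := ℝ)) k]
    have hm : min ((1 - t) + (1 - t)) 1 = 1 := min_eq_right (by linarith)
    rw [hm, sub_self, mul_zero, zero_sub, max_eq_right (by simp),
      max_eq_right (by linarith [(Nat.cast_nonneg a : (0 : ℝ) ≤ a)])]
  · rw [min_eq_left (by linarith : (1 - t) + (1 - t) ≤ 1)]
    congr 2
    ring

/-- An MV-homomorphism from `McN([0,1]^n)` to the standard MV-algebra `[0,1]`. -/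
structure McNUnitHom (n : ℕ) where
  toFun : McN n → ℝ
  mem_Icc : ∀ f, toFun f ∈ Icc (0 : ℝ) 1
  map_add : ∀ f g, toFun (McN.add f g) = min (toFun f + toFun g) 1
  map_neg : ∀ f, toFun (McN.neg f) = 1 - toFun f

namespace McNUnitHom

variable {n : ℕ}

instance : CoeFun (McNUnitHom n) (fun _ => McN n → ℝ) := ⟨toFun⟩

variable (χ : McNUnitHom n)

theorem map_zero : χ McN.zero = 0 := by
  have h1 : McN.add McN.zero (McN.neg McN.zero) = McN.neg (McN.zero : McN n) := by
    ext x; simp [McN.add, McN.neg, McN.zero, mvAdd, mvNeg]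
  have h2 := χ.map_add McN.zero (McN.neg McN.zero)
  rw [h1, χ.map_neg] at h2
  have h0 := χ.mem_Icc McN.zero
  rcases le_total (χ McN.zero + (1 - χ McN.zero)) 1 with h | h
  · rw [min_eq_left h] at h2; linarith [h0.1]
  · rw [min_eq_right h] at h2; linarith

theorem map_one : χ McN.one = 1 := by
  have h : McN.one = McN.neg (n := n) McN.zero := by
    ext x; simp [McN.one, McN.neg, McN.zero, mvNeg]
  rw [h, χ.map_neg, χ.map_zero, sub_zero]

def Commutes (u : ℝ → ℝ) : Prop :=
  ∀ f : McN n, ∃ h : McN n, (∀ x, h.1 x = u (f.1 x)) ∧ χ h = u (χ f)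

variable {χ}

theorem Commutes.comp {u w : ℝ → ℝ} (hu : χ.Commutes u) (hw : χ.Commutes w) :
    χ.Commutes (u ∘ w) := by
  intro f
  obtain ⟨g, hg, hχg⟩ := hw f
  obtain ⟨h, hh, hχh⟩ := hu g
  exact ⟨h, fun x => by simp [hh, hg], by simp [hχh, hχg]⟩

variable (χ)

theorem commutes_one_sub : χ.Commutes (fun t => 1 - t) :=
  fun f => ⟨McN.neg f, fun _ => rfl, χ.map_neg f⟩

theorem commutes_double : χ.Commutes (fun t => min (t + t) 1) :=
  fun f => ⟨McN.add f f, fun _ => rfl, χ.map_add f f⟩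

theorem commutes_clamp : χ.Commutes (fun t => min (max t 0) 1) := by
  refine fun f => ⟨f, fun x => ?_, ?_⟩
  · have := McN.mem_Icc f x
    simp only [max_eq_left this.1, min_eq_left this.2]
  · have := χ.mem_Icc f
    simp only [max_eq_left this.1, min_eq_left this.2]

theorem commutes_dyadic (k : ℕ) : ∀ a : ℕ, a < 2 ^ k →
    χ.Commutes (fun t => min (max ((2 : ℝ) ^ k * t - a) 0) 1) := by
  induction k with
  | zero =>
    intro a ha
    obtain rfl : a = 0 := by simpa using ha
    simpa using χ.commutes_clamp
  | succ k ih =>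
    intro a ha
    by_cases hak : a < 2 ^ k
    · have key := fun t => clamp_pow_mul_double t hak
      have := (ih a hak).comp χ.commutes_double
      simpa only [Function.comp_def, key] using this
    · obtain ⟨b, rfl⟩ := Nat.exists_eq_add_of_le (not_lt.mp hak)
      have := ((((ih b (by omega)).comp χ.commutes_one_sub).comp χ.commutes_double).comp
        χ.commutes_one_sub)
      simpa only [Function.comp_def, clamp_pow_mul_double_dual] using this

theorem commutes_min_nsmul (m : ℕ) : χ.Commutes (fun t => min (m * t) 1) := by
  induction m with
  | zero =>
    exact fun _ => ⟨McN.zero, fun _ => by simp [McN.zero], by simp [χ.map_zero]⟩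
  | succ m ih =>
    intro f
    obtain ⟨h, hh, hχh⟩ := ih f
    have key : ∀ t : ℝ, 0 ≤ t → min (min (m * t) 1 + t) 1 = min ((m + 1 : ℕ) * t) 1 := by
      intro t ht
      push_cast
      rcases le_total (m * t) 1 with h | h
      · rw [min_eq_left h]; ring_nf
      · rw [min_eq_right h, min_eq_right (by linarith), min_eq_right (by nlinarith)]
    refine ⟨McN.add h f, fun x => ?_, ?_⟩
    · simp only [McN.add, mvAdd, hh, key _ (McN.mem_Icc f x).1]
    · rw [χ.map_add, hχh, key _ (χ.mem_Icc f).1]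

theorem exists_eq_zero_of_map_eq_zero {f : McN n} (hf : χ f = 0) : ∃ x, f.1 x = 0 := by
  by_contra! hpos
  obtain ⟨z, -, hz⟩ := isCompact_univ.exists_isMinOn univ_nonempty (McN.continuous f).continuousOn
  have hδ : 0 < f.1 z := lt_of_le_of_ne (McN.mem_Icc f z).1 (hpos z).symm
  obtain ⟨m, hm⟩ := exists_nat_ge (1 / f.1 z)
  obtain ⟨h, hh, hχh⟩ := χ.commutes_min_nsmul m f
  have h_one : h = McN.one := by
    ext x
    have hzx : f.1 z ≤ f.1 x := hz (mem_univ x)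
    rw [div_le_iff₀ hδ] at hm
    have : 1 ≤ m * f.1 x := hm.trans (mul_le_mul_of_nonneg_left hzx m.cast_nonneg)
    simp [hh, McN.one, min_eq_right this]
  have := χ.map_one
  rw [← h_one, hχh, hf] at this
  norm_num at this

theorem exists_common_zero : ∃ x₀, ∀ f : McN n, χ f = 0 → f.1 x₀ = 0 := by
  have : Nonempty {f : McN n // χ f = 0} := ⟨⟨McN.zero, χ.map_zero⟩⟩
  let Z : {f : McN n // χ f = 0} → Set (cubeSet n) := fun f => {x | f.1.1 x = 0}
  have hdir : Directed (· ⊇ ·) Z := by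
    intro f g
    refine ⟨⟨McN.add f.1 g.1, by simp [χ.map_add, f.2, g.2]⟩, ?_, ?_⟩ <;>
    · intro x hx
      have hsum : min (f.1.1 x + g.1.1 x) 1 = 0 := hx
      have h₁ := (McN.mem_Icc f.1 x).1
      have h₂ := (McN.mem_Icc g.1 x).1
      rcases le_total (f.1.1 x + g.1.1 x) 1 with h | h
      · rw [min_eq_left h] at hsum
        show _ = _
        linarith
      · rw [min_eq_right h] at hsum; norm_num at hsum
  have hclosed : ∀ f, IsClosed (Z f) := fun f => isClosed_eq (McN.continuous f.1) continuous_const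
  obtain ⟨x₀, hx₀⟩ := IsCompact.nonempty_iInter_of_directed_nonempty_isCompact_isClosed Z hdir
    (fun f => χ.exists_eq_zero_of_map_eq_zero f.2) (fun f => (hclosed f).isCompact) hclosed
  exact ⟨x₀, fun f hf => mem_iInter.mp hx₀ ⟨f, hf⟩⟩

theorem not_map_lt_apply {x₀ : cubeSet n} (hx₀ : ∀ f : McN n, χ f = 0 → f.1 x₀ = 0)
    (f : McN n) : ¬ χ f < f.1 x₀ := by
  intro hlt
  set c := χ f
  set v := f.1 x₀
  obtain ⟨k, hk⟩ := exists_pow_lt_of_lt_one (sub_pos.mpr hlt) (by norm_num : (1 / 2 : ℝ) < 1)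
  have hk2 : 1 < (2 : ℝ) ^ k * (v - c) := by
    have h2k : (2 : ℝ) ^ k * (1 / 2) ^ k = 1 := by rw [← mul_pow]; norm_num
    nlinarith [pow_pos (two_pos (α := ℝ)) k]
  -- a dyadic number `a / 2^k` strictly between `c` and `v`
  set a : ℕ := ⌊(2 : ℝ) ^ k * c⌋₊ + 1
  have hc0 : 0 ≤ (2 : ℝ) ^ k * c := by have := (χ.mem_Icc f).1; positivity
  have hca : (2 : ℝ) ^ k * c < a := by push_cast [a]; exact Nat.lt_floor_add_one _
  have hav : (a : ℝ) < 2 ^ k * v := by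
    have := Nat.floor_le hc0; push_cast [a]; linarith
  have ha : a < 2 ^ k := by
    have : (a : ℝ) < 2 ^ k := by nlinarith [(McN.mem_Icc f x₀).2, pow_pos (two_pos (α := ℝ)) k]
    exact_mod_cast this
  obtain ⟨h, hh, hχh⟩ := χ.commutes_dyadic k a ha f
  have hzero := hx₀ h (by
    simp only [hχh]
    rw [max_eq_right (by linarith), min_eq_left zero_le_one])
  simp only [hh] at hzero
  have : 0 < min (max ((2 : ℝ) ^ k * v - a) 0) 1 :=
    lt_min (lt_max_of_lt_left (by linarith)) one_pos
  exact this.ne' hzero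

theorem exists_eq_eval : ∃ x₀ : cubeSet n, ∀ f : McN n, χ f = f.1 x₀ := by
  obtain ⟨x₀, hx₀⟩ := χ.exists_common_zero
  refine ⟨x₀, fun f => le_antisymm ?_ (not_lt.mp (χ.not_map_lt_apply hx₀ f))⟩
  have := χ.not_map_lt_apply hx₀ (McN.neg f)
  rw [χ.map_neg] at this
  simp only [McN.neg, mvNeg] at this
  linarith

end McNUnitHom

namespace IsMcNRetraction

variable {n : ℕ} {ε : McN n → McN n} {A : Set (cubeSet n → ℝ)}

def evalAt (hε : IsMcNRetraction ε A) (x : cubeSet n) : McNUnitHom n where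
  toFun g := (ε g).1 x
  mem_Icc g := McN.mem_Icc (ε g) x
  map_add f g := congrFun (hε.1 f g _) x
  map_neg f := congrFun (hε.2.1 f _) x

theorem apply_eq_self_of_separates (hε : IsMcNRetraction ε A)
    (hsep : ∀ x y : cubeSet n, x ≠ y → ∃ f ∈ A, f x ≠ f y) (f : McN n) : ε f = f := by
  ext x
  obtain ⟨x₀, hx₀⟩ := (hε.evalAt x).exists_eq_eval
  have hA : ∀ g, (ε g).1 x = (ε g).1 x₀ := fun g => by
    rw [← hx₀ (ε g), evalAt]
    dsimp only
    rw [hε.2.2.1]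
  obtain rfl : x = x₀ := by
    by_contra hne
    obtain ⟨a, ha, hax⟩ := hsep x x₀ hne
    rw [← hε.2.2.2] at ha
    obtain ⟨-, ⟨g, rfl⟩, rfl⟩ := ha
    exact hax (hA g)
  exact hx₀ f

theorem eq_McN_of_separates (hε : IsMcNRetraction ε A)
    (hsep : ∀ x y : cubeSet n, x ≠ y → ∃ f ∈ A, f x ≠ f y) : A = McN n := by
  rw [← hε.2.2.2]
  ext f
  refine ⟨?_, fun hf => ⟨⟨f, hf⟩, ⟨⟨f, hf⟩, hε.apply_eq_self_of_separates hsep _⟩, rfl⟩⟩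
  rintro ⟨g, -, rfl⟩
  exact g.2

end IsMcNRetraction

theorem IsZRetraction.apply_eq_self_of_mem_zRange {n : ℕ} {σ : (Fin n → ℝ) → (Fin n → ℝ)}
    (hσ : IsZRetraction σ) {y : Fin n → ℝ} (hy : y ∈ zRange σ) : σ y = y := by
  obtain ⟨w, hw, rfl⟩ := hy
  exact hσ.2.2 w hw

/-- The coordinate `(σ ·) i` lies in `A_σ`; were it of the form `g ∘ τ`, then evaluating at `x`
and at `τ x`, which `σ` and `τ` both fix, would give `σ x i = g (τ x) = τ x i`. -/
theorem not_retAlg_subset_of_apply_ne {n : ℕ} {σ τ : (Fin n → ℝ) → (Fin n → ℝ)}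
    (hσ : IsZRetraction σ) (hτ : IsZRetraction τ) (hR : zRange σ = zRange τ)
    {x : Fin n → ℝ} (hx : x ∈ cubeSet n) {i : Fin n} (hne : σ x i ≠ τ x i) :
    ¬ retAlg σ ⊆ retAlg τ := by
  intro hsub
  obtain ⟨g, -, hg⟩ := hsub (⟨_, McN.proj_mem i, fun _ _ => rfl⟩ :
    (fun z : cubeSet n => σ z.1 i) ∈ retAlg σ)
  have hτx : τ x ∈ cubeSet n := hτ.2.1 hx
  have hfix : τ (τ x) = τ x := hτ.2.2 x hx
  have hσfix : σ (τ x) = τ x := hσ.apply_eq_self_of_mem_zRange (hR ▸ ⟨x, hx, rfl⟩)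
  have h₁ : σ x i = g ⟨τ x, hτx⟩ := hg ⟨x, hx⟩ hτx
  have h₂ : σ (τ x) i = g ⟨τ x, hτx⟩ := by
    refine (hg ⟨τ x, hτx⟩ (hτ.2.1 hτx)).trans ?_
    exact congrArg g (Subtype.ext hfix)
  rw [hσfix] at h₂
  exact hne (h₁.trans h₂.symm)

theorem stmt19_general {n : ℕ} :
    (∀ A : Set (↥(cubeSet n) → ℝ), (∃ ε, IsMcNRetraction ε A) →
      (∀ x y : ↥(cubeSet n), x ≠ y → ∃ f ∈ A, f x ≠ f y) → A = McN n) ∧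
    (∀ σ τ : (Fin n → ℝ) → (Fin n → ℝ), IsZRetraction σ → IsZRetraction τ →
      zRange σ = zRange τ → ¬ Set.EqOn σ τ (cubeSet n) →
      ¬ retAlg σ ⊆ retAlg τ ∧ ¬ retAlg τ ⊆ retAlg σ) := by
  refine ⟨fun A ⟨ε, hε⟩ hsep => hε.eq_McN_of_separates hsep, ?_⟩
  intro σ τ hσ hτ hR hneq
  obtain ⟨x, hx, hxne⟩ : ∃ x ∈ cubeSet n, σ x ≠ τ x := by
    by_contra! h
    exact hneq h
  obtain ⟨i, hi⟩ := Function.ne_iff.mp hxne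
  exact ⟨not_retAlg_subset_of_apply_ne hσ hτ hR hx hi,
    not_retAlg_subset_of_apply_ne hτ hσ hR.symm hx (Ne.symm hi)⟩

/-- A separating retract of `McN([0,1]^n)` is all of `McN([0,1]^n)`;
moreover, distinct Z-retractions with equal range yield incomparable retracts. -/
theorem stmt19 {n : ℕ} (hn : 1 ≤ n) :
    (∀ A : Set (↥(cubeSet n) → ℝ), (∃ ε, IsMcNRetraction ε A) →
      (∀ x y : ↥(cubeSet n), x ≠ y → ∃ f ∈ A, f x ≠ f y) → A = McN n) ∧
    (∀ σ τ : (Fin n → ℝ) → (Fin n → ℝ), IsZRetraction σ → IsZRetraction τ →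
      zRange σ = zRange τ → ¬ Set.EqOn σ τ (cubeSet n) →
      ¬ retAlg σ ⊆ retAlg τ ∧ ¬ retAlg τ ⊆ retAlg σ) :=
  stmt19_general
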